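/- The space of vectors in Δ = (ℂ²)^{⊗m} annihilated by the spin-representation image of su(m) (embedded in so(2m) as in the standard complex-structure embedding) is exactly 2-dimensional, spanned by u(1,…,1) and u(-1,…,-1). -/
import Mathlib


open Complex Matrix BigOperators

noncomputable section

/-- The 2×2 identity matrix `E`. -/
def E2 : Matrix (Fin 2) (Fin 2) ℂ := 1

/-- The matrix `T = [[0,-i],[i,0]]`. -/
def Tm : Matrix (Fin 2) (Fin 2) ℂ := !![0, -Complex.I; Complex.I, 0]

/-- The matrix `U = diag(i,-i)`. -/
def Um : Matrix (Fin 2) (Fin 2) ℂ := !![Complex.I, 0; 0, -Complex.I]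

/-- The matrix `V = [[0,i],[i,0]]`. -/
def Vm : Matrix (Fin 2) (Fin 2) ℂ := !![0, Complex.I; Complex.I, 0]

/-- The vector `u(ε) = (1/√2)·(1, -ε·i) ∈ ℂ²`. -/
def uvec (ε : ℂ) : Fin 2 → ℂ := ((Real.sqrt 2 : ℂ))⁻¹ • ![1, -ε * Complex.I]

/-- The basis vector `u(ε_m, …, ε_1) = u(ε_m) ⊗ ⋯ ⊗ u(ε_1)` of `Δ = (ℂ²)^{⊗ m}`,
realized as a function on multi-indices; the index `i = 0` corresponds to the rightmost
tensor factor (i.e. to `ε_1`). -/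
def uB {m : ℕ} (ε : Fin m → ℂ) : (Fin m → Fin 2) → ℂ :=
  fun x => ∏ i, uvec (ε i) (x i)

/-- The `m`-fold Kronecker (tensor) product of 2×2 matrices, as a matrix acting on
`(ℂ²)^{⊗ m}`; the factor `i = 0` is the rightmost one. -/
def tensM {m : ℕ} (M : Fin m → Matrix (Fin 2) (Fin 2) ℂ) :
    Matrix (Fin m → Fin 2) (Fin m → Fin 2) ℂ :=
  Matrix.of fun x y => ∏ i, M i (x i) (y i)

/-- The Clifford representation `Φ` in even dimension `n = 2m` with signs `κ`:
`Φ(e_{2k-1}) = τ_{2k-1}·E^{⊗(m-k)} ⊗ U ⊗ T^{⊗(k-1)}`,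
`Φ(e_{2k})   = τ_{2k}·E^{⊗(m-k)} ⊗ V ⊗ T^{⊗(k-1)}`,
where `τ_j = i` if `κ_j = -1` and `τ_j = 1` if `κ_j = 1`.
Here `j : Fin (2*m)` is the zero-based index, so `j` corresponds to `e_{j+1}`. -/
def PhiEven (m : ℕ) (κ : Fin (2*m) → ℂ) (j : Fin (2*m)) :
    Matrix (Fin m → Fin 2) (Fin m → Fin 2) ℂ :=
  (if κ j = -1 then Complex.I else 1) •
    tensM (fun i => if (i : ℕ) < (j : ℕ)/2 then Tm
      else if (i : ℕ) = (j : ℕ)/2 then (if (j : ℕ) % 2 = 0 then Um else Vm) else E2)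

/-- `Δ⁺`: span of the basis vectors `u(ε_m,…,ε_1)` with `∏ ε_j = 1`. -/
def Dplus (m : ℕ) : Submodule ℂ ((Fin m → Fin 2) → ℂ) :=
  Submodule.span ℂ
    {v | ∃ ε : Fin m → ℂ, (∀ j, ε j = 1 ∨ ε j = -1) ∧ (∏ j, ε j) = 1 ∧ v = uB ε}

/-- `Δ⁻`: span of the basis vectors `u(ε_m,…,ε_1)` with `∏ ε_j = -1`. -/
def Dminus (m : ℕ) : Submodule ℂ ((Fin m → Fin 2) → ℂ) :=
  Submodule.span ℂ
    {v | ∃ ε : Fin m → ℂ, (∀ j, ε j = 1 ∨ ε j = -1) ∧ (∏ j, ε j) = -1 ∧ v = uB ε}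

/-- The spin representation ρ(E_{ij}) = (1/2)·Φ(e_i)·Φ(e_j) of so(2m) on (ℂ²)^{⊗m},
for the positive definite signature (all κ_j = 1). Indices are zero-based. -/
def rhoE (m : ℕ) (i j : Fin (2*m)) : Matrix (Fin m → Fin 2) (Fin m → Fin 2) ℂ :=
  (2⁻¹ : ℂ) • (PhiEven m (fun _ => 1) i * PhiEven m (fun _ => 1) j)


section Aux

lemma tensM_mul {m : ℕ} (M N : Fin m → Matrix (Fin 2) (Fin 2) ℂ) :
    tensM M * tensM N = tensM (fun i => M i * N i) := by
  ext x z
  simp only [tensM, Matrix.mul_apply, Matrix.of_apply]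
  rw [Finset.prod_univ_sum, Fintype.piFinset_univ]
  exact Finset.sum_congr rfl fun y _ => (Finset.prod_mul_distrib).symm

lemma tensM_one {m : ℕ} : tensM (fun _ : Fin m => (1 : Matrix (Fin 2) (Fin 2) ℂ)) = 1 := by
  ext x y
  simp only [tensM, Matrix.of_apply, Matrix.one_apply]
  by_cases h : x = y
  · subst h; simp
  · rw [if_neg h]
    obtain ⟨i, hi⟩ : ∃ i, x i ≠ y i := Function.ne_iff.mp h
    exact Finset.prod_eq_zero (Finset.mem_univ i) (by simp [hi])

lemma tensM_mulVec {m : ℕ} (M : Fin m → Matrix (Fin 2) (Fin 2) ℂ) (g : Fin m → Fin 2 → ℂ) :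
    (tensM M).mulVec (fun y => ∏ i, g i (y i)) = fun x => ∏ i, (M i).mulVec (g i) (x i) := by
  funext x
  simp only [tensM, Matrix.mulVec, dotProduct, Matrix.of_apply]
  rw [Finset.prod_univ_sum, Fintype.piFinset_univ]
  exact Finset.sum_congr rfl fun y _ => (Finset.prod_mul_distrib).symm

lemma tensM_mulVec_uB {m : ℕ} (M : Fin m → Matrix (Fin 2) (Fin 2) ℂ)
    (ε ε' : Fin m → ℂ) (c : Fin m → ℂ)
    (h : ∀ i, (M i).mulVec (uvec (ε i)) = c i • uvec (ε' i)) :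
    (tensM M).mulVec (uB ε) = (∏ i, c i) • uB ε' := by
  have : (tensM M).mulVec (uB ε) = fun x => ∏ i, (M i).mulVec (uvec (ε i)) (x i) :=
    tensM_mulVec M (fun i => uvec (ε i))
  rw [this]
  funext x
  simp only [Pi.smul_apply, uB, smul_eq_mul]
  rw [← Finset.prod_mul_distrib]
  exact Finset.prod_congr rfl fun i _ => by rw [h i]; simp [mul_comm]

lemma TT : Tm * Tm = 1 := by
  ext i j
  fin_cases i <;> fin_cases j <;>
    simp [Tm, Matrix.mul_apply, Fin.sum_univ_two, Matrix.one_apply]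

lemma Tm_act (e : ℂ) (he : e * e = 1) : Tm.mulVec (uvec e) = (-e) • uvec e := by
  funext x
  fin_cases x
  · simp [Tm, uvec, Matrix.mulVec, dotProduct, Fin.sum_univ_two]
    ring_nf
    linear_combination ((((Real.sqrt 2:ℝ):ℂ))⁻¹*e)*Complex.I_sq
  · simp [Tm, uvec, Matrix.mulVec, dotProduct, Fin.sum_univ_two]
    ring_nf
    linear_combination (-(((Real.sqrt 2:ℝ):ℂ))⁻¹*Complex.I)*he

lemma Um_act (e : ℂ) : Um.mulVec (uvec e) = Complex.I • uvec (-e) := by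
  funext x
  fin_cases x <;>
    simp [Um, uvec, Matrix.mulVec, dotProduct, Fin.sum_univ_two] <;> ring

lemma Vm_act (e : ℂ) (he : e * e = 1) : Vm.mulVec (uvec e) = e • uvec (-e) := by
  funext x
  fin_cases x
  · simp [Vm, uvec, Matrix.mulVec, dotProduct, Fin.sum_univ_two]
    ring_nf
    linear_combination (-(((Real.sqrt 2:ℝ):ℂ))⁻¹*e)*Complex.I_sq
  · simp [Vm, uvec, Matrix.mulVec, dotProduct, Fin.sum_univ_two]
    ring_nf
    linear_combination (-(((Real.sqrt 2:ℝ):ℂ))⁻¹*Complex.I)*he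

lemma UT_act (e : ℂ) (he : e * e = 1) :
    (Um * Tm).mulVec (uvec e) = (-(e * Complex.I)) • uvec (-e) := by
  rw [← Matrix.mulVec_mulVec, Tm_act e he, Matrix.mulVec_smul, Um_act e, smul_smul]
  ring_nf

lemma VT_act (e : ℂ) (he : e * e = 1) :
    (Vm * Tm).mulVec (uvec e) = (-1 : ℂ) • uvec (-e) := by
  rw [← Matrix.mulVec_mulVec, Tm_act e he, Matrix.mulVec_smul, Vm_act e he, smul_smul]
  rw [show -e * e = -1 by linear_combination -he]

lemma UV_act (e : ℂ) (he : e * e = 1) :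
    (Um * Vm).mulVec (uvec e) = (e * Complex.I) • uvec e := by
  rw [← Matrix.mulVec_mulVec, Vm_act e he, Matrix.mulVec_smul, Um_act (-e), neg_neg, smul_smul]

/-- Factor matrices of `Φ(e_j)` for `j/2 = k` and head matrix `A`. -/
def phiFacM {m : ℕ} (k : Fin m) (A : Matrix (Fin 2) (Fin 2) ℂ) : Fin m → Matrix (Fin 2) (Fin 2) ℂ :=
  fun i => if (i : ℕ) < (k : ℕ) then Tm else if (i : ℕ) = (k : ℕ) then A else E2

lemma PhiEven_even {m : ℕ} (k : Fin m) (a : Fin (2*m)) (ha : (a : ℕ) = 2 * (k : ℕ)) :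
    PhiEven m (fun _ => 1) a = tensM (phiFacM k Um) := by
  have h1 : (a : ℕ) / 2 = (k : ℕ) := by omega
  have h2 : (a : ℕ) % 2 = 0 := by omega
  rw [PhiEven, if_neg (by norm_num), one_smul, h1, h2]
  congr 1

lemma PhiEven_odd {m : ℕ} (k : Fin m) (a : Fin (2*m)) (ha : (a : ℕ) = 2 * (k : ℕ) + 1) :
    PhiEven m (fun _ => 1) a = tensM (phiFacM k Vm) := by
  have h1 : (a : ℕ) / 2 = (k : ℕ) := by omega
  have h2 : (a : ℕ) % 2 = 1 := by omega
  rw [PhiEven, if_neg (by norm_num), one_smul, h1, h2]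
  congr 1

lemma prod_split {α : Type*} [Fintype α] [DecidableEq α] (c : α → ℂ) {k l : α} (h : k ≠ l) :
    ∏ i, c i = c k * (c l * ∏ i ∈ (Finset.univ.erase k).erase l, c i) := by
  rw [← Finset.mul_prod_erase _ c (Finset.mem_univ k),
      ← Finset.mul_prod_erase _ c (Finset.mem_erase.mpr ⟨h.symm, Finset.mem_univ l⟩)]

lemma fac_pair_act {m : ℕ} (k l : Fin m) (hkl : k < l) (A B : Matrix (Fin 2) (Fin 2) ℂ)
    (ε : Fin m → ℂ) (hε : ∀ i, ε i * ε i = 1) (cA cB : ℂ)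
    (hA : (A * Tm).mulVec (uvec (ε k)) = cA • uvec (-ε k))
    (hB : B.mulVec (uvec (ε l)) = cB • uvec (-ε l)) :
    (tensM (fun i => phiFacM k A i * phiFacM l B i)).mulVec (uB ε)
      = (∏ i, (if i = k then cA else if i = l then cB
          else if (k : ℕ) < (i : ℕ) ∧ (i : ℕ) < (l : ℕ) then -ε i else 1))
        • uB (fun i => if i = k then -ε i else if i = l then -ε i else ε i) := by
  apply tensM_mulVec_uB
  intro i
  have hkl' : (k : ℕ) < (l : ℕ) := hkl
  rcases Nat.lt_trichotomy (i : ℕ) (k : ℕ) with h | h | h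
  · -- i < k
    have h2 : (i : ℕ) < (l : ℕ) := h.trans hkl'
    have hik : i ≠ k := Fin.ne_of_val_ne (Nat.ne_of_lt h)
    have hil : i ≠ l := Fin.ne_of_val_ne (Nat.ne_of_lt h2)
    have hik' : i < k := Fin.lt_def.mpr h
    have hil' : i < l := Fin.lt_def.mpr h2
    have hnk : ¬ (k : ℕ) < (i : ℕ) := by omega
    simp [phiFacM, h, h2, hik, hil, hik', hil', hnk, TT, Matrix.one_mulVec]
  · -- i = k
    have hik : i = k := Fin.ext h
    subst hik
    have hil : i ≠ l := Fin.ne_of_val_ne (Nat.ne_of_lt (h ▸ hkl'))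
    have hni : ¬ i < i := lt_irrefl i
    have hil' : i < l := Fin.lt_def.mpr hkl'
    simp [phiFacM, hni, hil, hil', hA]
  · -- k < i
    have hik : i ≠ k := Fin.ne_of_val_ne (Nat.ne_of_gt h)
    have hik2 : ¬ (i : ℕ) = (k : ℕ) := by omega
    have hnik : ¬ i < k := by rw [Fin.lt_def]; omega
    rcases Nat.lt_trichotomy (i : ℕ) (l : ℕ) with h2 | h2 | h2
    · have hil : i ≠ l := Fin.ne_of_val_ne (Nat.ne_of_lt h2)
      have hil' : i < l := Fin.lt_def.mpr h2
      simp [phiFacM, hnik, hik2, hik, hil, hil', h, h2, E2, Tm_act (ε i) (hε i)]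
    · have hil : i = l := Fin.ext h2
      subst hil
      simp [phiFacM, hnik, hik2, hik, lt_irrefl, E2, hB]
    · have hil : i ≠ l := Fin.ne_of_val_ne (Nat.ne_of_gt h2)
      have hil2 : ¬ (i : ℕ) = (l : ℕ) := by omega
      have hnil : ¬ i < l := by rw [Fin.lt_def]; omega
      have hnl : ¬ (i : ℕ) < (l : ℕ) := by omega
      simp [phiFacM, hnik, hik2, hik, hil, hil2, hnil, hnl, E2, Matrix.one_mulVec]

lemma fac_diag_act {m : ℕ} (k : Fin m) (ε : Fin m → ℂ) (hε : ∀ i, ε i * ε i = 1) :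
    (tensM (fun i => phiFacM k Um i * phiFacM k Vm i)).mulVec (uB ε)
      = (ε k * Complex.I) • uB ε := by
  have : (tensM (fun i => phiFacM k Um i * phiFacM k Vm i)).mulVec (uB ε)
      = (∏ i, (if i = k then ε k * Complex.I else 1)) • uB ε := by
    apply tensM_mulVec_uB
    intro i
    rcases Nat.lt_trichotomy (i : ℕ) (k : ℕ) with h | h | h
    · have hik : i ≠ k := Fin.ne_of_val_ne (Nat.ne_of_lt h)
      have hik' : i < k := Fin.lt_def.mpr h
      simp [phiFacM, hik, hik', TT, Matrix.one_mulVec]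
    · have hik : i = k := Fin.ext h
      subst hik
      simp [phiFacM, lt_irrefl, UV_act (ε i) (hε i)]
    · have hik : i ≠ k := Fin.ne_of_val_ne (Nat.ne_of_gt h)
      have hik2 : ¬ (i : ℕ) = (k : ℕ) := by omega
      have hnik : ¬ i < k := by rw [Fin.lt_def]; omega
      simp [phiFacM, hik, hik2, hnik, E2, Matrix.one_mulVec]
  rw [this, Finset.prod_ite_eq' Finset.univ k (fun _ => ε k * Complex.I),
    if_pos (Finset.mem_univ k)]

lemma rhoE_diag_act {m : ℕ} (k : Fin m) (a b : Fin (2*m))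
    (ha : (a : ℕ) = 2 * (k : ℕ)) (hb : (b : ℕ) = 2 * (k : ℕ) + 1)
    (ε : Fin m → ℂ) (hε : ∀ i, ε i * ε i = 1) :
    (rhoE m a b).mulVec (uB ε) = (2⁻¹ * (ε k * Complex.I)) • uB ε := by
  rw [rhoE, PhiEven_even k a ha, PhiEven_odd k b hb, tensM_mul,
    Matrix.smul_mulVec, fac_diag_act k ε hε, smul_smul]

lemma rhoE_pair_act {m : ℕ} (k l : Fin m) (hkl : k < l) (a b : Fin (2*m))
    (A B : Matrix (Fin 2) (Fin 2) ℂ)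
    (hPa : PhiEven m (fun _ => 1) a = tensM (phiFacM k A))
    (hPb : PhiEven m (fun _ => 1) b = tensM (phiFacM l B))
    (ε : Fin m → ℂ) (hε : ∀ i, ε i * ε i = 1) (cA cB : ℂ)
    (hA : (A * Tm).mulVec (uvec (ε k)) = cA • uvec (-ε k))
    (hB : B.mulVec (uvec (ε l)) = cB • uvec (-ε l)) :
    (rhoE m a b).mulVec (uB ε)
      = (2⁻¹ * (cA * (cB * ∏ i ∈ (Finset.univ.erase k).erase l,
          (if (k : ℕ) < (i : ℕ) ∧ (i : ℕ) < (l : ℕ) then -ε i else 1))))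
        • uB (fun i => if i = k then -ε i else if i = l then -ε i else ε i) := by
  rw [rhoE, hPa, hPb, tensM_mul, Matrix.smul_mulVec,
    fac_pair_act k l hkl A B ε hε cA cB hA hB, smul_smul]
  congr 2
  rw [prod_split _ (ne_of_lt hkl)]
  rw [if_pos rfl, if_neg (ne_of_gt hkl), if_pos rfl]
  congr 1
  congr 1
  apply Finset.prod_congr rfl
  intro i hi
  simp only [Finset.mem_erase] at hi
  rw [if_neg hi.2.1, if_neg hi.1]

/-- sign of a `Fin 2` index -/
def sg : Fin 2 → ℂ := ![1, -1]

lemma sg_sq (t : Fin 2) : sg t * sg t = 1 := by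
  fin_cases t <;> norm_num [sg]

def Qm : Matrix (Fin 2) (Fin 2) ℂ := Matrix.of fun a b => uvec (sg b) a

def Qm' : Matrix (Fin 2) (Fin 2) ℂ :=
  ((Real.sqrt 2 : ℂ))⁻¹ • !![1, Complex.I; 1, -Complex.I]

lemma sqrt2_mul : ((Real.sqrt 2 : ℝ) : ℂ) * ((Real.sqrt 2 : ℝ) : ℂ) = 2 := by
  rw [← Complex.ofReal_mul, Real.mul_self_sqrt (by norm_num)]
  norm_num

lemma sqrt2_ne : ((Real.sqrt 2 : ℝ) : ℂ) ≠ 0 := by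
  intro h
  have := sqrt2_mul
  rw [h] at this
  norm_num at this

lemma QQ' : Qm * Qm' = 1 := by
  have h2 := sqrt2_mul
  have hne := sqrt2_ne
  ext a b
  fin_cases a <;> fin_cases b <;>
    (simp [Qm, Qm', uvec, sg, Matrix.mul_apply, Fin.sum_univ_two, Matrix.one_apply]
     try field_simp
     try ring_nf
     try simp [Complex.I_sq]
     try linear_combination h2
     try linear_combination -h2
     try linear_combination (2:ℂ)*h2
     try linear_combination ((Real.sqrt 2:ℝ):ℂ)*h2
     try linear_combination Complex.I_sq
     try linear_combination h2 + Complex.I_sq)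

lemma Q'Q : Qm' * Qm = 1 := by
  have h2 := sqrt2_mul
  have hne := sqrt2_ne
  ext a b
  fin_cases a <;> fin_cases b <;>
    (simp [Qm, Qm', uvec, sg, Matrix.mul_apply, Fin.sum_univ_two, Matrix.one_apply]
     try field_simp
     try ring_nf
     try simp [Complex.I_sq]
     try linear_combination h2
     try linear_combination -h2
     try linear_combination (2:ℂ)*h2
     try linear_combination ((Real.sqrt 2:ℝ):ℂ)*h2
     try linear_combination Complex.I_sq
     try linear_combination h2 + Complex.I_sq
     try linear_combination h2 - Complex.I_sq
     try linear_combination h2*Complex.I_sq)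

def Pm (m : ℕ) : Matrix (Fin m → Fin 2) (Fin m → Fin 2) ℂ := tensM (fun _ => Qm)
def Pm' (m : ℕ) : Matrix (Fin m → Fin 2) (Fin m → Fin 2) ℂ := tensM (fun _ => Qm')

lemma PP' (m : ℕ) : Pm m * Pm' m = 1 := by
  rw [Pm, Pm', tensM_mul]
  simp only [QQ']
  exact tensM_one

lemma P'P (m : ℕ) : Pm' m * Pm m = 1 := by
  rw [Pm, Pm', tensM_mul]
  simp only [Q'Q]
  exact tensM_one

lemma expandP {m : ℕ} (d : (Fin m → Fin 2) → ℂ) :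
    (Pm m).mulVec d = ∑ s, d s • uB (fun i => sg (s i)) := by
  funext x
  simp only [Pm, tensM, Matrix.mulVec, dotProduct, Matrix.of_apply,
    Finset.sum_apply, Pi.smul_apply, smul_eq_mul, uB]
  exact Finset.sum_congr rfl fun y _ => by rw [mul_comm]; rfl

lemma P_inj {m : ℕ} {d d' : (Fin m → Fin 2) → ℂ}
    (h : (Pm m).mulVec d = (Pm m).mulVec d') : d = d' := by
  have h2 := congrArg ((Pm' m).mulVec ·) h
  simpa [Matrix.mulVec_mulVec, P'P, Matrix.one_mulVec] using h2

lemma P_decomp {m : ℕ} (v : (Fin m → Fin 2) → ℂ) :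
    v = (Pm m).mulVec ((Pm' m).mulVec v) := by
  rw [Matrix.mulVec_mulVec, PP', Matrix.one_mulVec]

lemma op_on {m : ℕ} (A : Matrix (Fin m → Fin 2) (Fin m → Fin 2) ℂ)
    (d : (Fin m → Fin 2) → ℂ) (μ : (Fin m → Fin 2) → ℂ)
    (h : ∀ s, A.mulVec (uB (fun i => sg (s i))) = μ s • uB (fun i => sg (s i))) :
    A.mulVec ((Pm m).mulVec d) = (Pm m).mulVec (fun s => d s * μ s) := by
  rw [expandP, expandP]
  have : A.mulVec (∑ s, d s • uB (fun i => sg (s i)))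
      = ∑ s, d s • A.mulVec (uB (fun i => sg (s i))) := by
    rw [← Matrix.mulVecLin_apply, map_sum]
    exact Finset.sum_congr rfl fun s _ => by rw [_root_.map_smul, Matrix.mulVecLin_apply]
  rw [this]
  exact Finset.sum_congr rfl fun s _ => by rw [h s, smul_smul]

lemma genX {m : ℕ} (e : ℂ) (he : e * e = 1) (k l : Fin m) (hkl : k < l)
    (a b a' b' : Fin (2*m)) (ha : (a : ℕ) = 2*(k : ℕ)) (hb : (b : ℕ) = 2*(l : ℕ))
    (ha' : (a' : ℕ) = 2*(k : ℕ)+1) (hb' : (b' : ℕ) = 2*(l : ℕ)+1) :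
    (rhoE m a b + rhoE m a' b').mulVec (uB (fun _ => e)) = 0 := by
  rw [Matrix.add_mulVec,
    rhoE_pair_act k l hkl a b Um Um (PhiEven_even k a ha) (PhiEven_even l b hb)
      (fun _ => e) (fun _ => he) (-(e * Complex.I)) Complex.I (UT_act e he) (Um_act e),
    rhoE_pair_act k l hkl a' b' Vm Vm (PhiEven_odd k a' ha') (PhiEven_odd l b' hb')
      (fun _ => e) (fun _ => he) (-1) e (VT_act e he) (Vm_act e he),
    ← add_smul]
  set R := ∏ i ∈ (Finset.univ.erase k).erase l,
    (if (k : ℕ) < (i : ℕ) ∧ (i : ℕ) < (l : ℕ) then -e else 1) with hR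
  have : (2⁻¹ * (-(e * Complex.I) * (Complex.I * R)) + 2⁻¹ * (-1 * (e * R)) : ℂ) = 0 := by
    linear_combination (-(2⁻¹ : ℂ) * e * R) * Complex.I_sq
  rw [this, zero_smul]

lemma genY {m : ℕ} (e : ℂ) (he : e * e = 1) (k l : Fin m) (hkl : k < l)
    (a b a' b' : Fin (2*m)) (ha : (a : ℕ) = 2*(k : ℕ)) (hb : (b : ℕ) = 2*(l : ℕ)+1)
    (ha' : (a' : ℕ) = 2*(k : ℕ)+1) (hb' : (b' : ℕ) = 2*(l : ℕ)) :
    (rhoE m a b - rhoE m a' b').mulVec (uB (fun _ => e)) = 0 := by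
  rw [Matrix.sub_mulVec,
    rhoE_pair_act k l hkl a b Um Vm (PhiEven_even k a ha) (PhiEven_odd l b hb)
      (fun _ => e) (fun _ => he) (-(e * Complex.I)) e (UT_act e he) (Vm_act e he),
    rhoE_pair_act k l hkl a' b' Vm Um (PhiEven_odd k a' ha') (PhiEven_even l b' hb')
      (fun _ => e) (fun _ => he) (-1) Complex.I (VT_act e he) (Um_act e),
    ← sub_smul]
  set R := ∏ i ∈ (Finset.univ.erase k).erase l,
    (if (k : ℕ) < (i : ℕ) ∧ (i : ℕ) < (l : ℕ) then -e else 1) with hR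
  have : (2⁻¹ * (-(e * Complex.I) * (e * R)) - 2⁻¹ * (-1 * (Complex.I * R)) : ℂ) = 0 := by
    linear_combination (-(2⁻¹ : ℂ) * Complex.I * R) * he
  rw [this, zero_smul]

lemma genD {m : ℕ} (e : ℂ) (he : e * e = 1) (k0 k : Fin m)
    (a b a' b' : Fin (2*m)) (ha : (a : ℕ) = 2*(k0 : ℕ)) (hb : (b : ℕ) = 2*(k0 : ℕ)+1)
    (ha' : (a' : ℕ) = 2*(k : ℕ)) (hb' : (b' : ℕ) = 2*(k : ℕ)+1) :
    (rhoE m a b - rhoE m a' b').mulVec (uB (fun _ => e)) = 0 := by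
  rw [Matrix.sub_mulVec,
    rhoE_diag_act k0 a b ha hb (fun _ => e) (fun _ => he),
    rhoE_diag_act k a' b' ha' hb' (fun _ => e) (fun _ => he),
    sub_self]

lemma fin2_cases (t : Fin 2) : t = 0 ∨ t = 1 := by omega

lemma mu_ne {a b : Fin 2} (hab : a ≠ b) :
    (2⁻¹ * (sg a * Complex.I) - 2⁻¹ * (sg b * Complex.I) : ℂ) ≠ 0 := by
  fin_cases a <;> fin_cases b <;> simp_all [sg] <;> intro h <;>
    first
      | exact Complex.I_ne_zero (by linear_combination h)
      | exact Complex.I_ne_zero (by linear_combination -h)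

end Aux

/-- the space of vectors of Δ = (ℂ²)^{⊗m} annihilated by the spin
representation of su(m) ⊂ so(2m) (spanned by the operators of X_{kl}, Y_{kl} and
D_1 - D_k) is exactly the 2-dimensional span of u(1,…,1) and u(-1,…,-1). -/
theorem stmt11 (m : ℕ) :
    {v : (Fin m → Fin 2) → ℂ |
      (∀ k l : Fin m, k < l →
        ((rhoE m ⟨2*(k : ℕ), by have := k.isLt; omega⟩ ⟨2*(l : ℕ), by have := l.isLt; omega⟩ +
          rhoE m ⟨2*(k : ℕ)+1, by have := k.isLt; omega⟩
            ⟨2*(l : ℕ)+1, by have := l.isLt; omega⟩).mulVec v = 0 ∧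
         (rhoE m ⟨2*(k : ℕ), by have := k.isLt; omega⟩
            ⟨2*(l : ℕ)+1, by have := l.isLt; omega⟩ -
          rhoE m ⟨2*(k : ℕ)+1, by have := k.isLt; omega⟩
            ⟨2*(l : ℕ), by have := l.isLt; omega⟩).mulVec v = 0)) ∧
      (∀ k : Fin m, 0 < (k : ℕ) →
        (rhoE m ⟨0, by have := k.isLt; omega⟩ ⟨1, by have := k.isLt; omega⟩ -
         rhoE m ⟨2*(k : ℕ), by have := k.isLt; omega⟩
           ⟨2*(k : ℕ)+1, by have := k.isLt; omega⟩).mulVec v = 0)} =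
    ↑(Submodule.span ℂ
        ({uB (fun _ => (1 : ℂ)), uB (fun _ => (-1 : ℂ))} :
          Set ((Fin m → Fin 2) → ℂ))) := by
  ext v
  constructor
  · -- kernel ⊆ span
    rintro ⟨hXY, hD⟩
    set d := (Pm' m).mulVec v with hd
    have hvd : v = (Pm m).mulVec d := P_decomp v
    -- key consequence of the D conditions
    have key : ∀ k : Fin m, 0 < (k : ℕ) → ∀ s : Fin m → Fin 2,
        d s * (2⁻¹ * (sg (s ⟨0, k.pos⟩) * Complex.I)
          - 2⁻¹ * (sg (s k) * Complex.I)) = 0 := by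
      intro k hk s
      have hD' := hD k hk
      rw [hvd, Matrix.sub_mulVec,
        op_on _ d (fun s => 2⁻¹ * (sg (s ⟨0, k.pos⟩) * Complex.I))
          (fun s => rhoE_diag_act ⟨0, k.pos⟩ _ _ (by norm_num) (by norm_num)
            (fun i => sg (s i)) (fun i => sg_sq (s i))),
        op_on _ d (fun s => 2⁻¹ * (sg (s k) * Complex.I))
          (fun s => rhoE_diag_act k _ _ (by norm_num) (by norm_num)
            (fun i => sg (s i)) (fun i => sg_sq (s i))),
        ← Matrix.mulVec_sub] at hD'
      have h0 : ((fun s => d s * (2⁻¹ * (sg (s ⟨0, k.pos⟩) * Complex.I)))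
          - (fun s => d s * (2⁻¹ * (sg (s k) * Complex.I))) : (Fin m → Fin 2) → ℂ) = 0 := by
        apply P_inj
        rw [hD', Matrix.mulVec_zero]
      have := congrFun h0 s
      simp only [Pi.sub_apply, Pi.zero_apply] at this
      linear_combination this
    rw [SetLike.mem_coe, hvd, expandP]
    apply Submodule.sum_mem
    intro s _
    by_cases hs : ∀ i j : Fin m, s i = s j
    · -- s constant: basis vector lies in the span
      apply Submodule.smul_mem
      apply Submodule.subset_span
      rcases isEmpty_or_nonempty (Fin m) with hm | hm
      · have harg : (fun i => sg (s i)) = (fun _ : Fin m => (1 : ℂ)) := by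
          funext i
          exact hm.elim i
        rw [harg]
        exact Set.mem_insert _ _
      · obtain ⟨z⟩ := hm
        rcases fin2_cases (s z) with h0 | h0
        · have harg : (fun i => sg (s i)) = (fun _ : Fin m => (1 : ℂ)) := by
            funext i
            rw [hs i z, h0]
            simp [sg]
          rw [harg]
          exact Set.mem_insert _ _
        · have harg : (fun i => sg (s i)) = (fun _ : Fin m => (-1 : ℂ)) := by
            funext i
            rw [hs i z, h0]
            simp [sg]
          rw [harg]
          exact Set.mem_insert_of_mem _ rfl
    · -- s nonconstant: coefficient vanishes
      push_neg at hs
      obtain ⟨i, j, hij⟩ := hs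
      have hm0 : 0 < m := i.pos
      have hex : ∃ k : Fin m, 0 < (k : ℕ) ∧ s k ≠ s ⟨0, hm0⟩ := by
        by_cases h1 : s i = s ⟨0, hm0⟩
        · refine ⟨j, ?_, fun h2 => hij (h1.trans h2.symm)⟩
          by_contra hj
          have hj0 : j = ⟨0, hm0⟩ := Fin.ext (show (j : ℕ) = 0 by omega)
          rw [hj0] at hij
          exact hij h1
        · refine ⟨i, ?_, h1⟩
          by_contra hi
          have hi0 : i = ⟨0, hm0⟩ := Fin.ext (show (i : ℕ) = 0 by omega)
          rw [hi0] at h1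
          exact h1 rfl
      obtain ⟨k, hk0, hkz⟩ := hex
      have hkey := key k hk0 s
      have hne : (2⁻¹ * (sg (s ⟨0, k.pos⟩) * Complex.I)
          - 2⁻¹ * (sg (s k) * Complex.I) : ℂ) ≠ 0 := mu_ne hkz.symm
      have hds : d s = 0 := by
        rcases mul_eq_zero.mp hkey with h | h
        · exact h
        · exact absurd h hne
      rw [hds, zero_smul]
      exact Submodule.zero_mem _
  · -- span ⊆ kernel
    intro hv
    obtain ⟨c1, c2, hc⟩ := Submodule.mem_span_pair.mp (SetLike.mem_coe.mp hv)
    have expand : ∀ A : Matrix (Fin m → Fin 2) (Fin m → Fin 2) ℂ,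
        A.mulVec (uB (fun _ => (1:ℂ))) = 0 → A.mulVec (uB (fun _ => (-1:ℂ))) = 0 →
        A.mulVec v = 0 := by
      intro A h1 h2
      rw [← hc, Matrix.mulVec_add, Matrix.mulVec_smul, Matrix.mulVec_smul, h1, h2,
        smul_zero, smul_zero, add_zero]
    refine ⟨fun k l hkl => ⟨?_, ?_⟩, fun k hk => ?_⟩
    · exact expand _ (genX 1 (by norm_num) k l hkl _ _ _ _ rfl rfl rfl rfl)
        (genX (-1) (by norm_num) k l hkl _ _ _ _ rfl rfl rfl rfl)
    · exact expand _ (genY 1 (by norm_num) k l hkl _ _ _ _ rfl rfl rfl rfl)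
        (genY (-1) (by norm_num) k l hkl _ _ _ _ rfl rfl rfl rfl)
    · exact expand _ (genD 1 (by norm_num) ⟨0, k.pos⟩ k _ _ _ _ (by norm_num) (by norm_num) rfl rfl)
        (genD (-1) (by norm_num) ⟨0, k.pos⟩ k _ _ _ _ (by norm_num) (by norm_num) rfl rfl)
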